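/- Fix n ∈ ℕ and a measurable partition of unity D on X. For every μ₀ ∈ M(D_m) and every real t > τ_n(μ₀,D) there exist a neighborhood O(μ₀) of μ₀ in M(D) and a measure μ ∈ O(μ₀) ∩ Int M(D_m) together with an optimizing limit μ' for (μ,n,D) such that τ_n(ν,μ,D) := Σ_{g∈D_m} ν(g)·ln(μ'(g)/μ(g)) < t for all ν ∈ O(μ₀). -/

import Mathlib

open MeasureTheory Filter Topology
open scoped Classical ENNReal NNReal

noncomputable section

namespace TEntropyPaper

variable {X : Type*} [MeasurableSpace X]

/-- The mapping `α` is measurable and the shift operator `A f = f ∘ α` is bounded on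
`L¹(X, m)`; equivalently `m (α⁻¹ G) ≤ C · m G` for all measurable `G`. -/
def ShiftBounded (m : Measure X) (α : X → X) : Prop :=
  Measurable α ∧ ∃ C : ℝ≥0, ∀ s : Set X, MeasurableSet s → m (α ⁻¹' s) ≤ (C : ℝ≥0∞) * m s

/-- A positive normalized linear functional on `L^∞(X, m)`, encoded as a real-valued
map on functions `X → ℝ` which is linear and positive on essentially bounded
(strongly) measurable functions, respects `m`-a.e. equality, takes the value `1` at the
constant function `1` and (as a normalization) vanishes on functions not in `L^∞`. -/
structure PosFunctional (m : Measure X) where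
  toFun : (X → ℝ) → ℝ
  map_add' : ∀ f g : X → ℝ, MemLp f ⊤ m → MemLp g ⊤ m → toFun (f + g) = toFun f + toFun g
  map_smul' : ∀ (c : ℝ) (f : X → ℝ), MemLp f ⊤ m → toFun (c • f) = c * toFun f
  nonneg' : ∀ f : X → ℝ, MemLp f ⊤ m → (0 : X → ℝ) ≤ᵐ[m] f → 0 ≤ toFun f
  map_one' : toFun (fun _ => 1) = 1
  congr_ae' : ∀ f g : X → ℝ, MemLp f ⊤ m → MemLp g ⊤ m → f =ᵐ[m] g → toFun f = toFun g
  zero_of_ne' : ∀ f : X → ℝ, ¬ MemLp f ⊤ m → toFun f = 0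

/-- Evaluation of a functional in `M(X,m)` against the `L^∞` test functions. -/
def evalMap (m : Measure X) (μ : PosFunctional m) : {f : X → ℝ // MemLp f ⊤ m} → ℝ :=
  fun f => μ.toFun f.1

/-- The weak-* topology on `M(X,m)`: the topology of pointwise convergence on `L^∞`
test functions. -/
instance (m : Measure X) : TopologicalSpace (PosFunctional m) :=
  TopologicalSpace.induced (evalMap m) inferInstance

/-- `α`-invariance of a functional `μ ∈ M(X,m)`: `μ(f ∘ α) = μ(f)`. -/
def PosFunctional.Invariant (α : X → X) {m : Measure X} (μ : PosFunctional m) : Prop :=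
  ∀ f : X → ℝ, MemLp f ⊤ m → μ.toFun (f ∘ α) = μ.toFun f

/-- A measurable partition of unity on `X`: a finite set of nonnegative functions in
`L^∞(X,m)` summing to `1` almost everywhere. -/
def IsPartUnity (m : Measure X) (D : Finset (X → ℝ)) : Prop :=
  (∀ g ∈ D, MemLp g ⊤ m ∧ (0 : X → ℝ) ≤ᵐ[m] g) ∧ ∀ᵐ x ∂m, ∑ g ∈ D, g x = 1

/-- Birkhoff sum `S_n φ = φ + φ∘α + ⋯ + φ∘α^{n-1}`. -/
def birkhoff (α : X → X) (φ : X → ℝ) (n : ℕ) (x : X) : ℝ :=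
  ∑ i ∈ Finset.range n, φ (α^[i] x)

/-- The unit sphere of `L¹(X,m)`. -/
def UnitL1 (m : Measure X) : Set (X → ℝ) := {f | Integrable f m ∧ ∫ x, |f x| ∂m = 1}

/-- The integral `∫_X g · |f ∘ αⁿ| dm`. -/
def wInt (m : Measure X) (α : X → X) (n : ℕ) (g f : X → ℝ) : ℝ :=
  ∫ x, g x * |f (α^[n] x)| ∂m

/-- The summand `w · ln((∫_X g·|f∘αⁿ| dm)/w)` in the definition of `t`-entropy,
with values in `EReal`: it is `0` when `w = 0` and `-∞` when the integral vanishes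
while `w ≠ 0`. -/
def tauTermR (m : Measure X) (α : X → X) (n : ℕ) (w : ℝ) (f g : X → ℝ) : EReal :=
  if w = 0 then 0
  else if wInt m α n g f = 0 then ⊥
  else ((w * Real.log (wInt m α n g f / w) : ℝ) : EReal)

/-- `τ_n(w, D)` for an abstract weight function `w` on the elements of `D`. -/
def tauNDW (m : Measure X) (α : X → X) (n : ℕ) (D : Finset (X → ℝ))
    (w : (X → ℝ) → ℝ) : EReal :=
  if ∃ g ∈ D, (∫⁻ x, ENNReal.ofReal (g x) ∂m) = 0 ∧ 0 < w g then ⊥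
  else ⨆ f ∈ UnitL1 m, ∑ g ∈ D, tauTermR m α n (w g) f g

/-- `τ_n(μ, D)` for `μ ∈ M(X,m)` and a measurable partition of unity `D`. -/
def tauND (m : Measure X) (α : X → X) (μ : PosFunctional m) (n : ℕ)
    (D : Finset (X → ℝ)) : EReal :=
  tauNDW m α n D (fun g => μ.toFun g)

/-- `τ_n(μ) = inf_D τ_n(μ, D)` over all measurable partitions of unity `D`. -/
def tauN (m : Measure X) (α : X → X) (μ : PosFunctional m) (n : ℕ) : EReal :=
  ⨅ D ∈ {D : Finset (X → ℝ) | IsPartUnity m D}, tauND m α μ n D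

/-- The `t`-entropy `τ(μ) = inf_{n ≥ 1} τ_n(μ)/n`. -/
def tEntropy (m : Measure X) (α : X → X) (μ : PosFunctional m) : EReal :=
  ⨅ n : {k : ℕ // 0 < k}, ((((n : ℕ) : ℝ)⁻¹ : ℝ) : EReal) * tauN m α μ (n : ℕ)

/-- The operator norm `‖A_φⁿ‖` of the `n`-th power of the weighted shift operator
`A_φ f = e^φ · (f ∘ α)` on `L¹(X,m)`, i.e. the supremum of `∫ e^{S_nφ}|f∘αⁿ| dm`
over the unit sphere of `L¹`. -/
def weightedOpNorm (m : Measure X) (α : X → X) (φ : X → ℝ) (n : ℕ) : ℝ :=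
  sSup {r : ℝ | ∃ f ∈ UnitL1 m,
    r = ∫ x, Real.exp (birkhoff α φ n x) * |f (α^[n] x)| ∂m}

/-- `D_m`: the elements of `D` which are not `m`-a.e. zero (i.e. `∫ g dm > 0`). -/
def Dm (m : Measure X) (D : Finset (X → ℝ)) : Finset (X → ℝ) :=
  D.filter (fun g => (∫⁻ x, ENNReal.ofReal (g x) ∂m) ≠ 0)

/-- The simplex `M(D)` of probability measures on the finite set `D`, realized as
weight functions vanishing outside `D`. -/
def MD (D : Finset (X → ℝ)) : Set ((X → ℝ) → ℝ) :=
  {w | (∀ g ∈ D, 0 ≤ w g) ∧ (∑ g ∈ D, w g) = 1 ∧ ∀ g ∉ D, w g = 0}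

/-- The sum `Σ_{g ∈ D_m} w(g)·ln((∫ g·|f∘αⁿ| dm)/w(g))`. -/
def tauSumDm (m : Measure X) (α : X → X) (n : ℕ) (D : Finset (X → ℝ))
    (w : (X → ℝ) → ℝ) (f : X → ℝ) : EReal :=
  ∑ g ∈ Dm m D, tauTermR m α n (w g) f g

/-- `τ_n(w, D)` with the sum restricted to `D_m`, for `w ∈ M(D_m)`. -/
def tauDm (m : Measure X) (α : X → X) (n : ℕ) (D : Finset (X → ℝ))
    (w : (X → ℝ) → ℝ) : EReal :=
  ⨆ f ∈ UnitL1 m, tauSumDm m α n D w f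

/-- `w'` is an optimizing limit for `(w, n, D)`: there is a sequence of nonnegative
unit-norm `f_i ∈ L¹(X,m)` along which the supremum defining `τ_n(w,D)` is attained in
the limit and `w'(g) = lim_i ∫ g·(f_i∘αⁿ) dm` for each `g ∈ D_m`. -/
def IsOptLimit (m : Measure X) (α : X → X) (n : ℕ) (D : Finset (X → ℝ))
    (w w' : (X → ℝ) → ℝ) : Prop :=
  ∃ F : ℕ → (X → ℝ),
    (∀ i, F i ∈ UnitL1 m ∧ (0 : X → ℝ) ≤ᵐ[m] F i) ∧
    (∀ g ∈ Dm m D, Tendsto (fun i => wInt m α n g (F i)) atTop (𝓝 (w' g))) ∧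
    Tendsto (fun i => tauSumDm m α n D w (F i)) atTop (𝓝 (tauDm m α n D w))

/-!
Mixing in a little of the uniform distribution, `μ = (1 - ε) μ₀ + ε · unif(D_m)`, raises `τ_n`
only slightly: `(a + b) ln (I / (a + b)) ≤ a ln (I / a) + b ln (I / b)`, and since every weight
`I = ∫ g · |f ∘ αⁿ| dm` is at most a constant `B` (boundedness of `Aⁿ` and `g ≤ 1`), the uniform
part contributes at most `ε ln (|D_m| B / ε) → 0`. The measure `μ` is strictly positive on `D_m`,
and `τ_n(μ, D) > -∞` (test against a strictly positive unit vector of `L¹`); along a maximizing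
sequence the weights therefore have subsequential limits `μ'` bounded away from `0`, and
`τ_n(μ, D) = Σ μ ln (μ' / μ)`. The open set `O = {ν | Σ ν ln (μ' / μ) < t}` contains `μ`, and it
contains `μ₀` because `μ ≥ (1 - ε) μ₀` gives `Σ μ₀ ln (μ' / μ) ≤ τ_n(μ₀, D) - ln (1 - ε)`.
-/

lemma _root_.EReal.coe_finset_sum {ι : Type*} (s : Finset ι) (a : ι → ℝ) :
    ((∑ i ∈ s, a i : ℝ) : EReal) = ∑ i ∈ s, (a i : EReal) := by
  induction s using Finset.induction_on with
  | empty => simp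
  | insert i s hi ih => rw [Finset.sum_insert hi, Finset.sum_insert hi, EReal.coe_add, ih]

section Real

open Real

variable {ι : Type*}

lemma mul_log_div_add_le {a b I : ℝ} (ha : 0 ≤ a) (hb : 0 < b) (hI : 0 < I) :
    (a + b) * log (I / (a + b)) ≤ a * log (I / a) + b * log (I / b) := by
  have hab : 0 < a + b := by linarith
  have hlog_b : log (I / (a + b)) ≤ log (I / b) :=
    log_le_log (by positivity) (div_le_div_of_nonneg_left hI.le hb (by linarith))
  rcases ha.eq_or_lt with rfl | ha
  · simp
  have hlog_a : log (I / (a + b)) ≤ log (I / a) :=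
    log_le_log (by positivity) (div_le_div_of_nonneg_left hI.le ha (by linarith))
  rw [add_mul]
  exact add_le_add (mul_le_mul_of_nonneg_left hlog_a ha.le)
    (mul_le_mul_of_nonneg_left hlog_b hb.le)

def mixUniform (s : Finset ι) (ε : ℝ) (w : ι → ℝ) (i : ι) : ℝ :=
  if i ∈ s then (1 - ε) * w i + ε / s.card else 0

variable {s : Finset ι} {ε : ℝ} {w : ι → ℝ} {i : ι}

lemma mixUniform_of_mem (hi : i ∈ s) : mixUniform s ε w i = (1 - ε) * w i + ε / s.card :=
  if_pos hi

lemma mul_le_mixUniform (hε : 0 ≤ ε) (hi : i ∈ s) : (1 - ε) * w i ≤ mixUniform s ε w i := by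
  rw [mixUniform_of_mem hi]
  have : 0 ≤ ε / s.card := by positivity
  linarith

lemma mixUniform_pos (hw : ∀ i ∈ s, 0 ≤ w i) (hε : 0 < ε) (hε1 : ε ≤ 1) (hi : i ∈ s) :
    0 < mixUniform s ε w i := by
  have hs : (0 : ℝ) < s.card := by exact_mod_cast Finset.card_pos.2 ⟨i, hi⟩
  rw [mixUniform_of_mem hi]
  have : 0 ≤ (1 - ε) * w i := mul_nonneg (by linarith) (hw i hi)
  have : 0 < ε / s.card := by positivity
  linarith

lemma sum_mixUniform (hw : ∑ i ∈ s, w i = 1) (hs : s.Nonempty) :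
    ∑ i ∈ s, mixUniform s ε w i = 1 := by
  have hcard : (s.card : ℝ) ≠ 0 := by exact_mod_cast hs.card_pos.ne'
  rw [Finset.sum_congr rfl fun i hi => mixUniform_of_mem hi, Finset.sum_add_distrib,
    ← Finset.mul_sum, hw, Finset.sum_const, nsmul_eq_mul]
  field_simp
  ring

lemma mixUniform_mem_MD {Y : Type*} {s : Finset (Y → ℝ)} {w : (Y → ℝ) → ℝ} (hw : w ∈ MD s)
    (hε : 0 < ε) (hε1 : ε ≤ 1) : mixUniform s ε w ∈ MD s :=
  ⟨fun _ hg => (mixUniform_pos hw.1 hε hε1 hg).le,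
    sum_mixUniform hw.2.1 (Finset.nonempty_of_sum_ne_zero (hw.2.1 ▸ one_ne_zero)),
    fun _ hg => if_neg hg⟩

lemma mul_log_div_mixUniform_le {I B : ℝ} (hw : 0 ≤ w i) (hε : 0 < ε) (hε1 : ε < 1)
    (hi : i ∈ s) (hI : 0 < I) (hIB : I ≤ B) :
    mixUniform s ε w i * log (I / mixUniform s ε w i) ≤
      (1 - ε) * (w i * log (I / w i)) - (1 - ε) * log (1 - ε) * w i +
        ε / s.card * log (s.card * B / ε) := by
  have hs : (0 : ℝ) < s.card := by exact_mod_cast Finset.card_pos.2 ⟨i, hi⟩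
  have hε' : 0 < ε / s.card := by positivity
  have hmix_part : (1 - ε) * w i * log (I / ((1 - ε) * w i)) =
      (1 - ε) * (w i * log (I / w i)) - (1 - ε) * log (1 - ε) * w i := by
    rcases hw.eq_or_lt with h0 | h0
    · simp [← h0]
    rw [← div_div, div_right_comm, log_div (by positivity) (by linarith)]
    ring
  have hunif_part :
      ε / s.card * log (I / (ε / s.card)) ≤ ε / s.card * log (s.card * B / ε) := by
    rw [div_div_eq_mul_div, mul_comm I]
    gcongr
  rw [mixUniform_of_mem hi]
  linarith [mul_log_div_add_le (mul_nonneg (by linarith : (0:ℝ) ≤ 1 - ε) hw) hε' hI]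

lemma sum_mul_log_div_mixUniform_le {I : ι → ℝ} {B r : ℝ} (hw : ∀ i ∈ s, 0 ≤ w i)
    (hw1 : ∑ i ∈ s, w i = 1) (hε : 0 < ε) (hε1 : ε < 1) (hI : ∀ i ∈ s, 0 < I i ∧ I i ≤ B)
    (hr : ∑ i ∈ s, w i * log (I i / w i) ≤ r) :
    ∑ i ∈ s, mixUniform s ε w i * log (I i / mixUniform s ε w i) ≤
      (1 - ε) * r - (1 - ε) * log (1 - ε) + ε * log (s.card * B / ε) := by
  rcases s.eq_empty_or_nonempty with rfl | hs
  · simp at hw1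
  have hcard : (s.card : ℝ) ≠ 0 := by exact_mod_cast hs.card_pos.ne'
  calc ∑ i ∈ s, mixUniform s ε w i * log (I i / mixUniform s ε w i)
      ≤ ∑ i ∈ s, ((1 - ε) * (w i * log (I i / w i)) - (1 - ε) * log (1 - ε) * w i +
          ε / s.card * log (s.card * B / ε)) :=
        Finset.sum_le_sum fun i hi =>
          mul_log_div_mixUniform_le (hw i hi) hε hε1 hi (hI i hi).1 (hI i hi).2
    _ = (1 - ε) * ∑ i ∈ s, w i * log (I i / w i) - (1 - ε) * log (1 - ε) +
          ε * log (s.card * B / ε) := by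
        rw [Finset.sum_add_distrib, Finset.sum_sub_distrib, ← Finset.mul_sum, ← Finset.mul_sum,
          hw1, Finset.sum_const, nsmul_eq_mul]
        field_simp
    _ ≤ _ := by gcongr

lemma exists_mixing_weight {r t c : ℝ} (hrt : r < t) (hc : 0 < c) :
    ∃ ε, 0 < ε ∧ ε < 1 ∧ (1 - ε) * r - (1 - ε) * log (1 - ε) + ε * log (c / ε) < t ∧
      r - log (1 - ε) < t := by
  have hbound : ContinuousAt
      (fun ε => (1 - ε) * r - (1 - ε) * log (1 - ε) + (ε * log c + negMulLog ε)) 0 := by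
    fun_prop (disch := norm_num)
  have hshift : ContinuousAt (fun ε => r - log (1 - ε)) 0 := by fun_prop (disch := norm_num)
  have hnear : ∀ᶠ ε in 𝓝 0, ε < 1 ∧
      (1 - ε) * r - (1 - ε) * log (1 - ε) + (ε * log c + negMulLog ε) < t ∧
      r - log (1 - ε) < t := by
    refine (eventually_lt_nhds one_pos).and ((hbound.eventually (gt_mem_nhds ?_)).and
      (hshift.eventually (gt_mem_nhds ?_))) <;> simpa using hrt
  obtain ⟨ε, ⟨hε1, hbound_lt, hshift_lt⟩, hε⟩ :=
    ((eventually_nhdsWithin_of_eventually_nhds hnear).and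
      (self_mem_nhdsWithin : Set.Ioi (0 : ℝ) ∈ 𝓝[>] 0)).exists
  have hsplit : ε * log (c / ε) = ε * log c + negMulLog ε := by
    rw [log_div hc.ne' (ne_of_gt hε), negMulLog]
    ring
  exact ⟨ε, hε, hε1, hsplit ▸ hbound_lt, hshift_lt⟩

lemma mul_exp_le_of_le_sum_mul_log_div {v I : ι → ℝ} {B L : ℝ} (hv : ∀ i ∈ s, 0 < v i)
    (hI : ∀ i ∈ s, 0 < I i ∧ I i ≤ B) (hL : L ≤ ∑ i ∈ s, v i * log (I i / v i)) (hi : i ∈ s) :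
    v i * exp ((L - ∑ j ∈ s.erase i, v j * log (B / v j)) / v i) ≤ I i := by
  have hrest :
      ∑ j ∈ s.erase i, v j * log (I j / v j) ≤ ∑ j ∈ s.erase i, v j * log (B / v j) := by
    refine Finset.sum_le_sum fun j hj => ?_
    have hj := Finset.mem_of_mem_erase hj
    exact mul_le_mul_of_nonneg_left (log_le_log (div_pos (hI j hj).1 (hv j hj))
      (div_le_div_of_nonneg_right (hI j hj).2 (hv j hj).le)) (hv j hj).le
  rw [← Finset.add_sum_erase _ _ hi] at hL
  rw [← le_div_iff₀' (hv i hi), ← le_log_iff_exp_le (div_pos (hI i hi).1 (hv i hi)),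
    div_le_iff₀' (hv i hi)]
  linarith

lemma sum_mul_log_div_le_of_mul_le {v w' : ι → ℝ} (hw : ∀ i ∈ s, 0 ≤ w i)
    (hw1 : ∑ i ∈ s, w i = 1) (hε1 : ε < 1) (hw' : ∀ i ∈ s, 0 < w' i)
    (hv : ∀ i ∈ s, (1 - ε) * w i ≤ v i) :
    ∑ i ∈ s, w i * log (w' i / v i) ≤ ∑ i ∈ s, w i * log (w' i / w i) - log (1 - ε) := by
  have hterm :
      ∀ i ∈ s, w i * log (w' i / v i) ≤ w i * log (w' i / w i) - log (1 - ε) * w i := by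
    intro i hi
    rcases (hw i hi).eq_or_lt with h0 | h0
    · simp [← h0]
    have hlog : log (w' i / v i) ≤ log (w' i / w i) - log (1 - ε) := by
      have hmix : 0 < (1 - ε) * w i := mul_pos (by linarith) h0
      rw [← log_div (div_pos (hw' i hi) h0).ne' (by linarith), div_div, mul_comm (w i)]
      exact log_le_log (div_pos (hw' i hi) (hmix.trans_le (hv i hi)))
        (div_le_div_of_nonneg_left (hw' i hi).le hmix (hv i hi))
    nlinarith
  calc _ ≤ ∑ i ∈ s, (w i * log (w' i / w i) - log (1 - ε) * w i) := Finset.sum_le_sum hterm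
    _ = _ := by rw [Finset.sum_sub_distrib, ← Finset.mul_sum, hw1, mul_one]

lemma exists_subseq_tendsto_of_mem_Icc {x : ℕ → ι → ℝ} {a b : ℝ}
    (hx : ∀ k, ∀ i ∈ s, x k i ∈ Set.Icc a b) :
    ∃ φ : ℕ → ℕ, StrictMono φ ∧
      ∃ y : ι → ℝ, ∀ i ∈ s, Tendsto (fun k => x (φ k) i) atTop (𝓝 (y i)) := by
  obtain ⟨y, -, φ, hφ, hy⟩ :=
    (isCompact_Icc (a := fun _ : s => a) (b := fun _ => b)).tendsto_subseq
      (x := fun k (i : s) => x k i) fun k => ⟨fun i => (hx k i i.2).1, fun i => (hx k i i.2).2⟩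
  refine ⟨φ, hφ, fun i => if hi : i ∈ s then y ⟨i, hi⟩ else 0, fun i hi => ?_⟩
  simpa [hi] using tendsto_pi_nhds.1 hy ⟨i, hi⟩

end Real

section Measure

variable {m : Measure X} {α : X → X} {n : ℕ} {D : Finset (X → ℝ)} {f g : X → ℝ}

lemma ShiftBounded.map_le_smul (hα : ShiftBounded m α) :
    ∃ C : ℝ≥0, m.map α ≤ (C : ℝ≥0∞) • m := by
  obtain ⟨hαm, C, hC⟩ := hα
  refine ⟨C, Measure.le_iff.2 fun s hs => ?_⟩
  simpa [Measure.map_apply hαm hs] using hC s hs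

lemma ShiftBounded.map_iterate_le_smul (hα : ShiftBounded m α) (n : ℕ) :
    ∃ C : ℝ≥0, m.map α^[n] ≤ (C : ℝ≥0∞) • m := by
  induction n with
  | zero => exact ⟨1, by simp⟩
  | succ n ih =>
    obtain ⟨C, hC⟩ := ih
    obtain ⟨C₁, hC₁⟩ := hα.map_le_smul
    refine ⟨C * C₁, ?_⟩
    calc m.map α^[n + 1] = (m.map α^[n]).map α := by
          rw [Measure.map_map hα.1 (hα.1.iterate n), ← Function.iterate_succ']
      _ ≤ ((C : ℝ≥0∞) • m).map α := Measure.map_mono hC hα.1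
      _ = (C : ℝ≥0∞) • m.map α := Measure.map_smul _ _ _
      _ ≤ (C : ℝ≥0∞) • (C₁ : ℝ≥0∞) • m := by gcongr
      _ = ((C * C₁ : ℝ≥0) : ℝ≥0∞) • m := by rw [smul_smul, ENNReal.coe_mul]

lemma ShiftBounded.integrable_comp_iterate (hα : ShiftBounded m α) (n : ℕ)
    (hf : Integrable f m) : Integrable (fun x => f (α^[n] x)) m := by
  obtain ⟨C, hC⟩ := hα.map_iterate_le_smul n
  exact ((hf.smul_measure ENNReal.coe_ne_top).mono_measure hC).comp_measurable (hα.1.iterate n)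

lemma ShiftBounded.exists_integral_abs_comp_iterate_le (hα : ShiftBounded m α) (n : ℕ) :
    ∃ B : ℝ, 0 < B ∧ ∀ f ∈ UnitL1 m, ∫ x, |f (α^[n] x)| ∂m ≤ B := by
  obtain ⟨C, hC⟩ := hα.map_iterate_le_smul n
  refine ⟨C + 1, by positivity, fun f hf => ?_⟩
  have hfC : Integrable (fun x => |f x|) ((C : ℝ≥0∞) • m) :=
    hf.1.abs.smul_measure ENNReal.coe_ne_top
  calc ∫ x, |f (α^[n] x)| ∂m = ∫ x, |f x| ∂(m.map α^[n]) :=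
        (integral_map (hα.1.iterate n).aemeasurable (hfC.mono_measure hC).1).symm
    _ ≤ ∫ x, |f x| ∂((C : ℝ≥0∞) • m) :=
        integral_mono_measure hC (ae_of_all _ fun x => abs_nonneg (f x)) hfC
    _ = C := by rw [integral_smul_measure, hf.2]; simp
    _ ≤ C + 1 := by linarith

lemma IsPartUnity.ae_le_one (hD : IsPartUnity m D) (hg : g ∈ D) : ∀ᵐ x ∂m, g x ≤ 1 := by
  filter_upwards [(eventually_all_finset D).2 fun h hh => (hD.1 h hh).2, hD.2] with x hnn hsum
  exact hsum ▸ Finset.single_le_sum (fun h hh => hnn h hh) hg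

lemma Dm_subset : Dm m D ⊆ D := Finset.filter_subset _ _

lemma abs_mem_unitL1 (hf : f ∈ UnitL1 m) : (fun x => |f x|) ∈ UnitL1 m :=
  ⟨hf.1.abs, by simpa using hf.2⟩

lemma exists_pos_mem_unitL1 [SigmaFinite m] [NeZero m] : ∃ f ∈ UnitL1 m, ∀ x, 0 < f x := by
  obtain ⟨p, hp_pos, hp_meas, hp_int⟩ := exists_pos_lintegral_lt_of_sigmaFinite m one_ne_zero
  have hp : Integrable (fun x => (p x : ℝ)) m :=
    ⟨hp_meas.coe_nnreal_real.aestronglyMeasurable,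
      by simpa [HasFiniteIntegral] using hp_int.trans ENNReal.one_lt_top⟩
  have hc : 0 < ∫ x, (p x : ℝ) ∂m := by
    refine (integral_pos_iff_support_of_nonneg (f := fun x => (p x : ℝ)) (fun x => (p x).2) hp).2 ?_
    simpa [Function.support, (hp_pos _).ne'] using NeZero.ne m
  refine ⟨fun x => p x / ∫ x, (p x : ℝ) ∂m, ⟨hp.div_const _, ?_⟩,
    fun x => div_pos (hp_pos x) hc⟩
  simp only [abs_div, NNReal.abs_eq, abs_of_pos hc, integral_div]
  exact div_self hc.ne'

lemma wInt_nonneg (hg : 0 ≤ᵐ[m] g) : 0 ≤ wInt m α n g f :=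
  integral_nonneg_of_ae (by filter_upwards [hg] with x hx using mul_nonneg hx (abs_nonneg _))

lemma wInt_abs : wInt m α n g (fun x => |f x|) = wInt m α n g f := by
  simp [wInt]

lemma ShiftBounded.integrable_mul_abs_comp_iterate (hα : ShiftBounded m α) (hg : MemLp g ⊤ m)
    (hf : Integrable f m) : Integrable (fun x => g x * |f (α^[n] x)|) m :=
  (hα.integrable_comp_iterate n hf).abs.mul_of_top_right hg

lemma ShiftBounded.exists_wInt_le (hα : ShiftBounded m α) (hD : IsPartUnity m D) (n : ℕ) :
    ∃ B : ℝ, 0 < B ∧ ∀ f ∈ UnitL1 m, ∀ g ∈ D, wInt m α n g f ≤ B := by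
  obtain ⟨B, hB0, hB⟩ := hα.exists_integral_abs_comp_iterate_le n
  refine ⟨B, hB0, fun f hf g hg => (integral_mono_ae
    (hα.integrable_mul_abs_comp_iterate (hD.1 g hg).1 hf.1)
    (hα.integrable_comp_iterate n hf.1).abs ?_).trans (hB f hf)⟩
  filter_upwards [hD.ae_le_one hg] with x hx
  exact mul_le_of_le_one_left (abs_nonneg _) hx

lemma ShiftBounded.wInt_pos (hα : ShiftBounded m α) (hD : IsPartUnity m D) (hg : g ∈ Dm m D)
    (hf : Integrable f m) (hf_pos : ∀ x, 0 < f x) : 0 < wInt m α n g f := by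
  obtain ⟨hgD, hg_ne⟩ := Finset.mem_filter.1 hg
  have hnn : 0 ≤ᵐ[m] fun x => g x * |f (α^[n] x)| := by
    filter_upwards [(hD.1 g hgD).2] with x hx using mul_nonneg hx (abs_nonneg _)
  rw [wInt, integral_pos_iff_support_of_nonneg_ae hnn
    (hα.integrable_mul_abs_comp_iterate (hD.1 g hgD).1 hf)]
  have hsupp : Function.support (fun x => g x * |f (α^[n] x)|) = Function.support g := by
    ext x
    simp [(hf_pos _).ne']
  rw [hsupp, pos_iff_ne_zero, Ne, m.measure_support_eq_zero_iff]
  intro hg0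
  exact hg_ne ((lintegral_congr_ae (hg0.fun_comp ENNReal.ofReal)).trans (by simp))

lemma ShiftBounded.exists_mem_unitL1_wInt_pos [SigmaFinite m] (hα : ShiftBounded m α)
    (hD : IsPartUnity m D) (hDm : (Dm m D).Nonempty) :
    ∃ f ∈ UnitL1 m, ∀ g ∈ Dm m D, 0 < wInt m α n g f := by
  have : NeZero m := ⟨fun hm => by
    obtain ⟨g, hg⟩ := hDm
    simp [hm, Dm] at hg⟩
  obtain ⟨f, hf, hf_pos⟩ := exists_pos_mem_unitL1 (m := m)
  exact ⟨f, hf, fun g hg => hα.wInt_pos hD hg hf.1 hf_pos⟩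

end Measure

section Entropy

variable {m : Measure X} {α : X → X} {n : ℕ} {D : Finset (X → ℝ)} {f g : X → ℝ}
  {v w w' : (X → ℝ) → ℝ}

lemma tauSumDm_eq_coe (hv : ∀ g ∈ Dm m D, 0 ≤ v g) (hf : ∀ g ∈ Dm m D, wInt m α n g f ≠ 0) :
    tauSumDm m α n D v f = ((∑ g ∈ Dm m D, v g * Real.log (wInt m α n g f / v g) : ℝ) : EReal) := by
  rw [tauSumDm, EReal.coe_finset_sum]
  refine Finset.sum_congr rfl fun g hg => ?_
  rcases (hv g hg).eq_or_lt with h0 | h0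
  · simp [tauTermR, ← h0]
  · rw [tauTermR, if_neg h0.ne', if_neg (hf g hg)]

lemma tauSumDm_eq_bot (hg : g ∈ Dm m D) (hv : v g ≠ 0) (hf : wInt m α n g f = 0) :
    tauSumDm m α n D v f = ⊥ := by
  rw [tauSumDm, ← Finset.add_sum_erase _ _ hg, tauTermR, if_neg hv, if_pos hf, EReal.bot_add]

lemma tauSumDm_abs : tauSumDm m α n D v (fun x => |f x|) = tauSumDm m α n D v f := by
  simp only [tauSumDm, tauTermR, wInt_abs]

lemma tauSumDm_le_tauDm (hf : f ∈ UnitL1 m) : tauSumDm m α n D v f ≤ tauDm m α n D v :=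
  le_iSup₂ (f := fun f (_ : f ∈ UnitL1 m) => tauSumDm m α n D v f) f hf

lemma tauDm_mixUniform_le {B r ε : ℝ} (hD : IsPartUnity m D)
    (hB : ∀ f ∈ UnitL1 m, ∀ g ∈ D, wInt m α n g f ≤ B) (hw : w ∈ MD (Dm m D))
    (hr : tauDm m α n D w ≤ r) (hε : 0 < ε) (hε1 : ε < 1) :
    tauDm m α n D (mixUniform (Dm m D) ε w) ≤
      (((1 - ε) * r - (1 - ε) * Real.log (1 - ε) +
        ε * Real.log ((Dm m D).card * B / ε) : ℝ) : EReal) := by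
  refine iSup₂_le fun f hf => ?_
  by_cases hzero : ∀ g ∈ Dm m D, wInt m α n g f ≠ 0
  swap
  · obtain ⟨g, hg, hf0⟩ : ∃ g ∈ Dm m D, wInt m α n g f = 0 := by simpa using hzero
    rw [tauSumDm_eq_bot hg (mixUniform_pos hw.1 hε hε1.le hg).ne' hf0]
    exact bot_le
  have hI : ∀ g ∈ Dm m D, 0 < wInt m α n g f ∧ wInt m α n g f ≤ B := fun g hg =>
    ⟨(wInt_nonneg (hD.1 g (Dm_subset hg)).2).lt_of_ne (hzero g hg).symm,
      hB f hf g (Dm_subset hg)⟩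
  have hw_le := (tauSumDm_le_tauDm hf).trans hr
  rw [tauSumDm_eq_coe hw.1 hzero, EReal.coe_le_coe_iff] at hw_le
  rw [tauSumDm_eq_coe (fun g hg => (mixUniform_pos hw.1 hε hε1.le hg).le) hzero,
    EReal.coe_le_coe_iff]
  exact sum_mul_log_div_mixUniform_le hw.1 hw.2.1 hε hε1 hI hw_le

lemma tendsto_tauSumDm_of_tendsto_wInt {F : ℕ → X → ℝ}
    (hF : ∀ g ∈ Dm m D, Tendsto (fun i => wInt m α n g (F i)) atTop (𝓝 (w' g)))
    (hw' : ∀ g ∈ Dm m D, 0 < w' g) (hv : ∀ g ∈ Dm m D, 0 ≤ v g) :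
    Tendsto (fun i => tauSumDm m α n D v (F i)) atTop
      (𝓝 ((∑ g ∈ Dm m D, v g * Real.log (w' g / v g) : ℝ) : EReal)) := by
  have hne : ∀ᶠ i in atTop, ∀ g ∈ Dm m D, wInt m α n g (F i) ≠ 0 :=
    (eventually_all_finset _).2 fun g hg => (hF g hg).eventually_ne (hw' g hg).ne'
  refine (EReal.tendsto_coe.2 (tendsto_finsetSum _ fun g hg => ?_)).congr'
    (hne.mono fun i hi => (tauSumDm_eq_coe hv hi).symm)
  rcases (hv g hg).eq_or_lt with h0 | h0
  · simp [← h0]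
  · exact (((hF g hg).div_const _).log (div_pos (hw' g hg) h0).ne').const_mul _

lemma IsOptLimit.sum_mul_log_div_le_tauDm (h : IsOptLimit m α n D v w')
    (hw' : ∀ g ∈ Dm m D, 0 < w' g) (hw : ∀ g ∈ Dm m D, 0 ≤ w g) :
    ((∑ g ∈ Dm m D, w g * Real.log (w' g / w g) : ℝ) : EReal) ≤ tauDm m α n D w := by
  obtain ⟨F, hF, hconv, -⟩ := h
  exact le_of_tendsto (tendsto_tauSumDm_of_tendsto_wInt hconv hw' hw)
    (Eventually.of_forall fun i => tauSumDm_le_tauDm (hF i).1)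

lemma IsOptLimit.tauDm_eq (h : IsOptLimit m α n D v w') (hw' : ∀ g ∈ Dm m D, 0 < w' g)
    (hv : ∀ g ∈ Dm m D, 0 ≤ v g) :
    tauDm m α n D v = ((∑ g ∈ Dm m D, v g * Real.log (w' g / v g) : ℝ) : EReal) := by
  obtain ⟨F, -, hconv, htend⟩ := h
  exact tendsto_nhds_unique htend (tendsto_tauSumDm_of_tendsto_wInt hconv hw' hv)

lemma exists_tendsto_tauDm (hne : (UnitL1 m).Nonempty) (v : (X → ℝ) → ℝ) :
    ∃ F : ℕ → X → ℝ, (∀ i, F i ∈ UnitL1 m ∧ 0 ≤ᵐ[m] F i) ∧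
      Tendsto (fun i => tauSumDm m α n D v (F i)) atTop (𝓝 (tauDm m α n D v)) := by
  obtain ⟨u, -, hu, hu_mem⟩ :=
    exists_seq_tendsto_sSup (hne.image (tauSumDm m α n D v)) (OrderTop.bddAbove _)
  choose F hF hFu using hu_mem
  refine ⟨fun i x => |F i x|, fun i => ⟨abs_mem_unitL1 (hF i), ae_of_all _ fun x => abs_nonneg _⟩,
    ?_⟩
  simp only [tauSumDm_abs, hFu, tauDm, ← sSup_image]
  exact hu

end Entropy

section OptimizingLimit

variable {m : Measure X} {α : X → X} {n : ℕ} {D : Finset (X → ℝ)} {v w' : (X → ℝ) → ℝ}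
  {F : ℕ → X → ℝ}

lemma pos_of_tendsto_wInt {B : ℝ} (hD : IsPartUnity m D)
    (hB : ∀ f ∈ UnitL1 m, ∀ g ∈ D, wInt m α n g f ≤ B) (hv : ∀ g ∈ Dm m D, 0 < v g)
    (hne : ∃ f ∈ UnitL1 m, ∀ g ∈ Dm m D, 0 < wInt m α n g f) (hF : ∀ i, F i ∈ UnitL1 m)
    (htend : Tendsto (fun i => tauSumDm m α n D v (F i)) atTop (𝓝 (tauDm m α n D v)))
    (hconv : ∀ g ∈ Dm m D, Tendsto (fun i => wInt m α n g (F i)) atTop (𝓝 (w' g))) :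
    ∀ g ∈ Dm m D, 0 < w' g := by
  obtain ⟨f₀, hf₀, hf₀_pos⟩ := hne
  set τ₀ := ∑ g ∈ Dm m D, v g * Real.log (wInt m α n g f₀ / v g)
  have hτ₀ : (τ₀ : EReal) ≤ tauDm m α n D v := by
    rw [← tauSumDm_eq_coe (fun g hg => (hv g hg).le) fun g hg => (hf₀_pos g hg).ne']
    exact tauSumDm_le_tauDm hf₀
  have hev : ∀ᶠ i in atTop, ((τ₀ - 1 : ℝ) : EReal) < tauSumDm m α n D v (F i) :=
    htend.eventually (lt_mem_nhds ((EReal.coe_lt_coe_iff.2 (by linarith)).trans_le hτ₀))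
  intro g hg
  have hlower : ∀ᶠ i in atTop, v g * Real.exp ((τ₀ - 1 -
      ∑ h ∈ (Dm m D).erase g, v h * Real.log (B / v h)) / v g) ≤ wInt m α n g (F i) := by
    filter_upwards [hev] with i hi
    have hI : ∀ h ∈ Dm m D, wInt m α n h (F i) ≠ 0 := fun h hh h0 => by
      rw [tauSumDm_eq_bot hh (hv h hh).ne' h0] at hi
      exact not_lt_bot hi
    rw [tauSumDm_eq_coe (fun h hh => (hv h hh).le) hI, EReal.coe_lt_coe_iff] at hi
    exact mul_exp_le_of_le_sum_mul_log_div hv (fun h hh =>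
      ⟨(wInt_nonneg (hD.1 h (Dm_subset hh)).2).lt_of_ne (hI h hh).symm,
        hB _ (hF i) h (Dm_subset hh)⟩) hi.le hg
  exact (mul_pos (hv g hg) (Real.exp_pos _)).trans_le (ge_of_tendsto (hconv g hg) hlower)

lemma ShiftBounded.exists_isOptLimit_pos [SigmaFinite m] (hα : ShiftBounded m α)
    (hD : IsPartUnity m D) (hDm : (Dm m D).Nonempty) (hv : ∀ g ∈ Dm m D, 0 < v g) :
    ∃ w', IsOptLimit m α n D v w' ∧ ∀ g ∈ Dm m D, 0 < w' g := by
  obtain ⟨B, -, hB⟩ := hα.exists_wInt_le hD n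
  have hne := hα.exists_mem_unitL1_wInt_pos (n := n) hD hDm
  obtain ⟨F, hF, htend⟩ := exists_tendsto_tauDm (α := α) (n := n) (D := D)
    (hne.imp fun _ => And.left) v
  obtain ⟨φ, hφ, w', hconv⟩ := exists_subseq_tendsto_of_mem_Icc
    (x := fun i g => wInt m α n g (F i)) (a := 0) (b := B) fun i g hg =>
      ⟨wInt_nonneg (hD.1 g (Dm_subset hg)).2, hB _ (hF i).1 g (Dm_subset hg)⟩
  have htend' := htend.comp hφ.tendsto_atTop
  exact ⟨w', ⟨F ∘ φ, fun i => hF (φ i), hconv, htend'⟩,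
    pos_of_tendsto_wInt hD hB hv hne (fun i => (hF (φ i)).1) htend' hconv⟩

end OptimizingLimit

theorem exists_nbhd_and_interior_measure_general
    (m : Measure X) [SigmaFinite m] (α : X → X) (hα : ShiftBounded m α)
    (n : ℕ) (D : Finset (X → ℝ)) (hD : IsPartUnity m D)
    (w₀ : (X → ℝ) → ℝ) (hw₀ : w₀ ∈ MD (Dm m D))
    (t : ℝ) (ht : tauDm m α n D w₀ < (t : EReal)) :
    ∃ O : Set ((X → ℝ) → ℝ), IsOpen O ∧ w₀ ∈ O ∧
      ∃ w w' : (X → ℝ) → ℝ, w ∈ O ∧ w ∈ MD (Dm m D) ∧ (∀ g ∈ Dm m D, 0 < w g) ∧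
        IsOptLimit m α n D w w' ∧
        ∀ ν ∈ O ∩ MD D, ∑ g ∈ Dm m D, ν g * Real.log (w' g / w g) < t := by
  have hDm : (Dm m D).Nonempty := Finset.nonempty_of_sum_ne_zero (hw₀.2.1 ▸ one_ne_zero)
  obtain ⟨B, hB0, hB⟩ := hα.exists_wInt_le hD n
  obtain ⟨r, hτr, hrt⟩ := EReal.exists_between_coe_real ht
  obtain ⟨ε, hε, hε1, hwt, hw₀t⟩ := exists_mixing_weight (EReal.coe_lt_coe_iff.1 hrt)
    (c := (Dm m D).card * B) (by have := hDm.card_pos; positivity)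
  set w := mixUniform (Dm m D) ε w₀
  have hw_pos : ∀ g ∈ Dm m D, 0 < w g := fun g hg => mixUniform_pos hw₀.1 hε hε1.le hg
  obtain ⟨w', hopt, hw'⟩ := hα.exists_isOptLimit_pos hD hDm hw_pos
  refine ⟨{ν | ∑ g ∈ Dm m D, ν g * Real.log (w' g / w g) < t},
    isOpen_lt (by fun_prop) continuous_const, ?_, w, w', ?_, mixUniform_mem_MD hw₀ hε hε1.le,
    hw_pos, hopt, fun ν hν => hν.1⟩
  · calc ∑ g ∈ Dm m D, w₀ g * Real.log (w' g / w g)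
        ≤ ∑ g ∈ Dm m D, w₀ g * Real.log (w' g / w₀ g) - Real.log (1 - ε) :=
          sum_mul_log_div_le_of_mul_le hw₀.1 hw₀.2.1 hε1 hw' fun g hg => mul_le_mixUniform hε.le hg
      _ ≤ r - Real.log (1 - ε) := by
          gcongr
          exact_mod_cast (hopt.sum_mul_log_div_le_tauDm hw' hw₀.1).trans hτr.le
      _ < t := hw₀t
  · have hτw := tauDm_mixUniform_le hD hB hw₀ hτr.le hε hε1
    rw [hopt.tauDm_eq hw' fun g hg => (hw_pos g hg).le, EReal.coe_le_coe_iff] at hτw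
    exact hτw.trans_lt hwt

/-- For every `μ₀ ∈ M(D_m)` and every `t > τ_n(μ₀,D)` there exist a neighborhood
`O(μ₀)` in `M(D)` and a measure `μ ∈ O(μ₀) ∩ Int M(D_m)` with an optimizing limit `μ'`
such that `τ_n(ν,μ,D) = Σ_{g∈D_m} ν(g)·ln(μ'(g)/μ(g)) < t` for all `ν ∈ O(μ₀)`. -/
theorem exists_nbhd_and_interior_measure
    (m : Measure X) [SigmaFinite m] (α : X → X) (hα : ShiftBounded m α)
    (n : ℕ) (hn : 0 < n) (D : Finset (X → ℝ)) (hD : IsPartUnity m D)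
    (w₀ : (X → ℝ) → ℝ) (hw₀ : w₀ ∈ MD (Dm m D))
    (t : ℝ) (ht : tauDm m α n D w₀ < (t : EReal)) :
    ∃ O : Set ((X → ℝ) → ℝ), IsOpen O ∧ w₀ ∈ O ∧
      ∃ w w' : (X → ℝ) → ℝ, w ∈ O ∧ w ∈ MD (Dm m D) ∧ (∀ g ∈ Dm m D, 0 < w g) ∧
        IsOptLimit m α n D w w' ∧
        ∀ ν ∈ O ∩ MD D, ∑ g ∈ Dm m D, ν g * Real.log (w' g / w g) < t :=
  exists_nbhd_and_interior_measure_general m α hα n D hD w₀ hw₀ t ht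

end TEntropyPaper
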